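/- The Gaussian curvature is determined by the geodesic curvatures of the lines of curvature: at every point of U, K = c₁c₂ = (1/√G) ∂_v κ₁ − (1/√E) ∂_u κ₂ − κ₁² − κ₂². Equivalently, K = ν · curl_s ω, where ω := −(κ₁ e₁ + κ₂ e₂) is the spin connection vector field. -/

import Mathlib

open MeasureTheory Real Filter

noncomputable section

abbrev V3 : Type := Fin 3 → ℝ

/-- partial derivative in `u` of a field on `ℝ²`. -/
def pu {X : Type} [NormedAddCommGroup X] [NormedSpace ℝ X] (f : ℝ × ℝ → X) (p : ℝ × ℝ) : X :=
  fderiv ℝ f p (1, 0)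

/-- partial derivative in `v` of a field on `ℝ²`. -/
def pv {X : Type} [NormedAddCommGroup X] [NormedSpace ℝ X] (f : ℝ × ℝ → X) (p : ℝ × ℝ) : X :=
  fderiv ℝ f p (0, 1)

/-- Euclidean dot product on `ℝ³`. -/
def dot3 (u v : V3) : ℝ := ∑ i, u i * v i

/-- cross product on `ℝ³`. -/
def cross3 (u v : V3) : V3 :=
  ![u 1 * v 2 - u 2 * v 1, u 2 * v 0 - u 0 * v 2, u 0 * v 1 - u 1 * v 0]

/-- tensor (outer) product `u ⊗ v`. -/
def tensor3 (u v : V3) : Matrix (Fin 3) (Fin 3) ℝ := Matrix.of fun i j => u i * v j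

def Efun (φ : ℝ × ℝ → V3) (p : ℝ × ℝ) : ℝ := dot3 (pu φ p) (pu φ p)
def Gfun (φ : ℝ × ℝ → V3) (p : ℝ × ℝ) : ℝ := dot3 (pv φ p) (pv φ p)
def e1 (φ : ℝ × ℝ → V3) (p : ℝ × ℝ) : V3 := (Real.sqrt (Efun φ p))⁻¹ • pu φ p
def e2 (φ : ℝ × ℝ → V3) (p : ℝ × ℝ) : V3 := (Real.sqrt (Gfun φ p))⁻¹ • pv φ p
def nuv (φ : ℝ × ℝ → V3) (p : ℝ × ℝ) : V3 := cross3 (e1 φ p) (e2 φ p)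

/-- surface gradient of a scalar field. -/
def gradS (φ : ℝ × ℝ → V3) (f : ℝ × ℝ → ℝ) (p : ℝ × ℝ) : V3 :=
  (pu f p / Real.sqrt (Efun φ p)) • e1 φ p + (pv f p / Real.sqrt (Gfun φ p)) • e2 φ p

/-- surface gradient of a vector field. -/
def gradSv (φ : ℝ × ℝ → V3) (w : ℝ × ℝ → V3) (p : ℝ × ℝ) : Matrix (Fin 3) (Fin 3) ℝ :=
  (Real.sqrt (Efun φ p))⁻¹ • tensor3 (pu w p) (e1 φ p) +
    (Real.sqrt (Gfun φ p))⁻¹ • tensor3 (pv w p) (e2 φ p)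

/-- surface divergence. -/
def divS (φ : ℝ × ℝ → V3) (w : ℝ × ℝ → V3) (p : ℝ × ℝ) : ℝ := Matrix.trace (gradSv φ w p)

/-- the axial vector `c` of an antisymmetric matrix `B`, i.e. the unique `c` with `c × a = B a`. -/
def axial (B : Matrix (Fin 3) (Fin 3) ℝ) : V3 := ![B 2 1, B 0 2, B 1 0]

/-- surface curl: the unique vector with `(curlS w) × a = (∇s w − (∇s w)ᵀ) a` for all `a`. -/
def curlS (φ : ℝ × ℝ → V3) (w : ℝ × ℝ → V3) (p : ℝ × ℝ) : V3 :=
  axial (gradSv φ w p - (gradSv φ w p).transpose)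

def ndir (φ : ℝ × ℝ → V3) (α : ℝ × ℝ → ℝ) (p : ℝ × ℝ) : V3 :=
  Real.cos (α p) • e1 φ p + Real.sin (α p) • e2 φ p
def tdir (φ : ℝ × ℝ → V3) (α : ℝ × ℝ → ℝ) (p : ℝ × ℝ) : V3 := cross3 (nuv φ p) (ndir φ α p)

def kap1 (φ : ℝ × ℝ → V3) (p : ℝ × ℝ) : ℝ :=
  -(pv (Efun φ) p) / (2 * Efun φ p * Real.sqrt (Gfun φ p))
def kap2 (φ : ℝ × ℝ → V3) (p : ℝ × ℝ) : ℝ :=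
  pu (Gfun φ) p / (2 * Gfun φ p * Real.sqrt (Efun φ p))

def cN (c₁ c₂ : ℝ × ℝ → ℝ) (α : ℝ × ℝ → ℝ) (p : ℝ × ℝ) : ℝ :=
  c₁ p * Real.cos (α p) ^ 2 + c₂ p * Real.sin (α p) ^ 2
def cT (c₁ c₂ : ℝ × ℝ → ℝ) (α : ℝ × ℝ → ℝ) (p : ℝ × ℝ) : ℝ :=
  c₁ p * Real.sin (α p) ^ 2 + c₂ p * Real.cos (α p) ^ 2
def tauG (c₁ c₂ : ℝ × ℝ → ℝ) (α : ℝ × ℝ → ℝ) (p : ℝ × ℝ) : ℝ :=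
  (c₁ p - c₂ p) * Real.sin (α p) * Real.cos (α p)
def kN (φ : ℝ × ℝ → V3) (α : ℝ × ℝ → ℝ) (p : ℝ × ℝ) : ℝ :=
  dot3 (gradS φ α p) (ndir φ α p) + kap1 φ p * Real.cos (α p) + kap2 φ p * Real.sin (α p)
def kT (φ : ℝ × ℝ → V3) (α : ℝ × ℝ → ℝ) (p : ℝ × ℝ) : ℝ :=
  dot3 (gradS φ α p) (tdir φ α p) - kap1 φ p * Real.sin (α p) + kap2 φ p * Real.cos (α p)

/-- the curvature tensor `L = c₁ e₁⊗e₁ + c₂ e₂⊗e₂`. -/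
def Lcurv (φ : ℝ × ℝ → V3) (c₁ c₂ : ℝ × ℝ → ℝ) (p : ℝ × ℝ) : Matrix (Fin 3) (Fin 3) ℝ :=
  c₁ p • tensor3 (e1 φ p) (e1 φ p) + c₂ p • tensor3 (e2 φ p) (e2 φ p)

/-- the shell parameterization. -/
def PhiMap (φ : ℝ × ℝ → V3) (x : (ℝ × ℝ) × ℝ) : V3 := φ x.1 + x.2 • nuv φ x.1

/-- Cartesian partial derivative on `ℝ³`. -/
def pd (i : Fin 3) {X : Type} [NormedAddCommGroup X] [NormedSpace ℝ X] (f : V3 → X) (x : V3) : X :=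
  fderiv ℝ f x (Pi.single i 1)

def div3 (w : V3 → V3) (x : V3) : ℝ := ∑ i, pd i w x i
def curl3 (w : V3 → V3) (x : V3) : V3 :=
  ![pd 1 w x 2 - pd 2 w x 1, pd 2 w x 0 - pd 0 w x 2, pd 0 w x 1 - pd 1 w x 0]
def grad3 (f : V3 → ℝ) (x : V3) : V3 := fun i => pd i f x
def Dmat3 (w : V3 → V3) (x : V3) : Matrix (Fin 3) (Fin 3) ℝ := Matrix.of fun i j => pd j w x i



/-! ### Auxiliary algebra lemmas -/

lemma dot3_smul_left' (c : ℝ) (x y : V3) : dot3 (c • x) y = c * dot3 x y := by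
  simp [dot3, Fin.sum_univ_three]; ring

lemma dot3_smul_right' (c : ℝ) (x y : V3) : dot3 x (c • y) = c * dot3 x y := by
  simp [dot3, Fin.sum_univ_three]; ring

lemma dot3_comm' (x y : V3) : dot3 x y = dot3 y x := by simp [dot3, Fin.sum_univ_three]; ring

lemma dot3_add_right' (x y z : V3) : dot3 x (y + z) = dot3 x y + dot3 x z := by
  simp [dot3, Fin.sum_univ_three]; ring

lemma cross3_smul₂ (c d : ℝ) (x y : V3) : cross3 (c • x) (d • y) = (c * d) • cross3 x y := by
  funext i; fin_cases i <;> (simp [cross3]; ring)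

lemma cross3_smul_left' (c : ℝ) (x y : V3) : cross3 (c • x) y = c • cross3 x y := by
  funext i; fin_cases i <;> (simp [cross3]; ring)

lemma lagrange3 (a b c d : V3) :
    dot3 (cross3 a b) (cross3 c d) = dot3 a c * dot3 b d - dot3 a d * dot3 b c := by
  simp [dot3, cross3, Fin.sum_univ_three]; ring

lemma dot3_cross_left' (a b : V3) : dot3 (cross3 a b) a = 0 := by
  simp [dot3, cross3, Fin.sum_univ_three]; ring

lemma dot3_cross_right' (a b : V3) : dot3 (cross3 a b) b = 0 := by
  simp [dot3, cross3, Fin.sum_univ_three]; ring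

lemma decomp3 (a b w1 w2 : V3) (h : dot3 a b = 0) :
    dot3 a a * dot3 b b * dot3 w1 w2 =
      dot3 w1 a * dot3 w2 a * dot3 b b + dot3 w1 b * dot3 w2 b * dot3 a a +
        dot3 w1 (cross3 a b) * dot3 w2 (cross3 a b) := by
  have h' : ∑ i, a i * b i = 0 := h
  simp only [dot3, cross3, Fin.sum_univ_three, Matrix.cons_val_zero, Matrix.cons_val_one,
    Matrix.head_cons, Matrix.cons_val_two, Matrix.tail_cons] at h' ⊢
  linear_combination (a 0 * b 0 + a 1 * b 1 + a 2 * b 2) *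
        (w1 0 * w2 0 + w1 1 * w2 1 + w1 2 * w2 2) * h' -
      (b 0 * w2 0 + b 1 * w2 1 + b 2 * w2 2) * (w1 0 * a 0 + w1 1 * a 1 + w1 2 * a 2) * h' -
      (a 0 * w2 0 + a 1 * w2 1 + a 2 * w2 2) * (w1 0 * b 0 + w1 1 * b 1 + w1 2 * b 2) * h'

lemma curl_dot3 (c d : ℝ) (X Y e f ν : V3) :
    dot3 ν (axial ((c • tensor3 X e + d • tensor3 Y f) -
        (c • tensor3 X e + d • tensor3 Y f).transpose)) =
      c * dot3 ν (cross3 e X) + d * dot3 ν (cross3 f Y) := by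
  simp [dot3, axial, tensor3, cross3, Fin.sum_univ_three, Matrix.sub_apply, Matrix.add_apply,
    Matrix.smul_apply, Matrix.transpose_apply, Matrix.of_apply, smul_eq_mul]
  ring

/-! ### Auxiliary calculus lemmas -/

lemma diffAt_of_cd {X : Type} [NormedAddCommGroup X] [NormedSpace ℝ X] {g : ℝ × ℝ → X}
    {U : Set (ℝ × ℝ)} (hU : IsOpen U) (hg : ContDiffOn ℝ (⊤ : ℕ∞) g U) {q : ℝ × ℝ} (hq : q ∈ U) :
    DifferentiableAt ℝ g q :=
  (hg.contDiffAt (hU.mem_nhds hq)).differentiableAt (by simp)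

lemma fderiv_dot3 {f g : ℝ × ℝ → V3} {p : ℝ × ℝ} (hf : DifferentiableAt ℝ f p)
    (hg : DifferentiableAt ℝ g p) (w : ℝ × ℝ) :
    fderiv ℝ (fun q => dot3 (f q) (g q)) p w =
      dot3 (fderiv ℝ f p w) (g p) + dot3 (f p) (fderiv ℝ g p w) := by
  have hfi : ∀ i : Fin 3, HasFDerivAt (fun q => f q i)
      ((ContinuousLinearMap.proj i).comp (fderiv ℝ f p)) p := fun i =>
    (ContinuousLinearMap.proj (R := ℝ) (φ := fun _ : Fin 3 => ℝ) i).hasFDerivAt.comp p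
      hf.hasFDerivAt
  have hgi : ∀ i : Fin 3, HasFDerivAt (fun q => g q i)
      ((ContinuousLinearMap.proj i).comp (fderiv ℝ g p)) p := fun i =>
    (ContinuousLinearMap.proj (R := ℝ) (φ := fun _ : Fin 3 => ℝ) i).hasFDerivAt.comp p
      hg.hasFDerivAt
  have h : ∀ i : Fin 3, HasFDerivAt (fun q => f q i * g q i)
      (f p i • ((ContinuousLinearMap.proj i).comp (fderiv ℝ g p)) +
        g p i • ((ContinuousLinearMap.proj i).comp (fderiv ℝ f p))) p := fun i =>
    (hfi i).mul (hgi i)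
  have H := HasFDerivAt.fun_sum (fun i (_ : i ∈ Finset.univ) => h i)
  have heq : fderiv ℝ (fun q => dot3 (f q) (g q)) p =
      fderiv ℝ (fun q => ∑ i : Fin 3, f q i * g q i) p := rfl
  rw [heq, H.fderiv]
  simp [dot3, ContinuousLinearMap.sum_apply, ContinuousLinearMap.add_apply,
    ContinuousLinearMap.smul_apply, ContinuousLinearMap.comp_apply, Fin.sum_univ_three]
  ring

lemma fderiv_smulV {c : ℝ × ℝ → ℝ} {f : ℝ × ℝ → V3} {p : ℝ × ℝ} (hc : DifferentiableAt ℝ c p)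
    (hf : DifferentiableAt ℝ f p) (w : ℝ × ℝ) :
    fderiv ℝ (fun q => c q • f q) p w = fderiv ℝ c p w • f p + c p • fderiv ℝ f p w := by
  rw [(hc.hasFDerivAt.fun_smul hf.hasFDerivAt).fderiv]; simp; exact add_comm _ _

lemma fderiv_sqrt_comp {g : ℝ × ℝ → ℝ} {p : ℝ × ℝ} (hg : DifferentiableAt ℝ g p)
    (h0 : g p ≠ 0) (w : ℝ × ℝ) :
    fderiv ℝ (fun q => Real.sqrt (g q)) p w = fderiv ℝ g p w / (2 * Real.sqrt (g p)) := by
  have h1 := (Real.hasDerivAt_sqrt h0).comp_hasFDerivAt p hg.hasFDerivAt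
  have h2 : (fun q => Real.sqrt (g q)) = (fun x => Real.sqrt x) ∘ g := rfl
  rw [h2, h1.fderiv]; simp; ring

lemma differentiableAt_sqrt_comp {g : ℝ × ℝ → ℝ} {p : ℝ × ℝ} (hg : DifferentiableAt ℝ g p)
    (h0 : g p ≠ 0) : DifferentiableAt ℝ (fun q => Real.sqrt (g q)) p :=
  ((Real.hasDerivAt_sqrt h0).comp_hasFDerivAt p hg.hasFDerivAt).differentiableAt

lemma fderiv_inv_comp {g : ℝ × ℝ → ℝ} {p : ℝ × ℝ} (hg : DifferentiableAt ℝ g p)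
    (h0 : g p ≠ 0) (w : ℝ × ℝ) :
    fderiv ℝ (fun q => (g q)⁻¹) p w = -fderiv ℝ g p w / (g p) ^ 2 := by
  have h1 := (hasDerivAt_inv h0).comp_hasFDerivAt p hg.hasFDerivAt
  have h2 : (fun q => (g q)⁻¹) = (fun x : ℝ => x⁻¹) ∘ g := rfl
  rw [h2, h1.fderiv]; simp; ring

lemma differentiableAt_inv_comp {g : ℝ × ℝ → ℝ} {p : ℝ × ℝ} (hg : DifferentiableAt ℝ g p)
    (h0 : g p ≠ 0) : DifferentiableAt ℝ (fun q => (g q)⁻¹) p :=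
  ((hasDerivAt_inv h0).comp_hasFDerivAt p hg.hasFDerivAt).differentiableAt

lemma fderiv_mulF {c d : ℝ × ℝ → ℝ} {p : ℝ × ℝ} (hc : DifferentiableAt ℝ c p)
    (hd : DifferentiableAt ℝ d p) (w : ℝ × ℝ) :
    fderiv ℝ (fun q => c q * d q) p w = fderiv ℝ c p w * d p + c p * fderiv ℝ d p w := by
  rw [(hc.hasFDerivAt.fun_mul hd.hasFDerivAt).fderiv]; simp; ring

lemma fderiv_negF {c : ℝ × ℝ → ℝ} {p : ℝ × ℝ} (w : ℝ × ℝ) :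
    fderiv ℝ (fun q => -(c q)) p w = -(fderiv ℝ c p w) := by
  rw [fderiv_fun_neg]; simp

lemma fderiv_divF {c d : ℝ × ℝ → ℝ} {p : ℝ × ℝ} (hc : DifferentiableAt ℝ c p)
    (hd : DifferentiableAt ℝ d p) (h0 : d p ≠ 0) (w : ℝ × ℝ) :
    fderiv ℝ (fun q => c q / d q) p w =
      (fderiv ℝ c p w * d p - c p * fderiv ℝ d p w) / d p ^ 2 := by
  have h1 : (fun q => c q / d q) = fun q => c q * (d q)⁻¹ := by
    funext q; rw [div_eq_mul_inv]
  rw [h1, fderiv_mulF hc (differentiableAt_inv_comp hd h0) w, fderiv_inv_comp hd h0 w]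
  field_simp; ring

lemma differentiableAt_divF {c d : ℝ × ℝ → ℝ} {p : ℝ × ℝ} (hc : DifferentiableAt ℝ c p)
    (hd : DifferentiableAt ℝ d p) (h0 : d p ≠ 0) :
    DifferentiableAt ℝ (fun q => c q / d q) p := by
  have h1 : (fun q => c q / d q) = fun q => c q * (d q)⁻¹ := by
    funext q; rw [div_eq_mul_inv]
  rw [h1]; exact hc.mul (differentiableAt_inv_comp hd h0)

lemma contDiffOn_dot3 {n : WithTop ℕ∞} {f g : ℝ × ℝ → V3} {U : Set (ℝ × ℝ)}
    (hf : ContDiffOn ℝ n f U) (hg : ContDiffOn ℝ n g U) :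
    ContDiffOn ℝ n (fun q => dot3 (f q) (g q)) U := by
  unfold dot3
  exact ContDiffOn.sum fun i _ => ((contDiffOn_pi.mp hf i).mul (contDiffOn_pi.mp hg i))

lemma contDiffOn_pun {n : ℕ∞} {X : Type} [NormedAddCommGroup X] [NormedSpace ℝ X]
    {f : ℝ × ℝ → X} {U : Set (ℝ × ℝ)} (hU : IsOpen U) (hf : ContDiffOn ℝ (⊤ : ℕ∞) f U) :
    ContDiffOn ℝ n (pu f) U := by
  have h : ContDiffOn ℝ n (fderiv ℝ f) U := (hf.fderiv_of_isOpen (m := ((⊤ : ℕ∞) : WithTop ℕ∞)) hU (by exact_mod_cast (le_top : (⊤ + 1 : ℕ∞) ≤ ⊤))).of_le (by exact_mod_cast (le_top : n ≤ ⊤))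
  exact h.clm_apply contDiffOn_const

lemma contDiffOn_pvn {n : ℕ∞} {X : Type} [NormedAddCommGroup X] [NormedSpace ℝ X]
    {f : ℝ × ℝ → X} {U : Set (ℝ × ℝ)} (hU : IsOpen U) (hf : ContDiffOn ℝ (⊤ : ℕ∞) f U) :
    ContDiffOn ℝ n (pv f) U := by
  have h : ContDiffOn ℝ n (fderiv ℝ f) U := (hf.fderiv_of_isOpen (m := ((⊤ : ℕ∞) : WithTop ℕ∞)) hU (by exact_mod_cast (le_top : (⊤ + 1 : ℕ∞) ≤ ⊤))).of_le (by exact_mod_cast (le_top : n ≤ ⊤))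
  exact h.clm_apply contDiffOn_const

lemma differentiableAt_cross3 {f g : ℝ × ℝ → V3} {p : ℝ × ℝ} (hf : DifferentiableAt ℝ f p)
    (hg : DifferentiableAt ℝ g p) : DifferentiableAt ℝ (fun q => cross3 (f q) (g q)) p := by
  have hfi := differentiableAt_pi.mp hf
  have hgi := differentiableAt_pi.mp hg
  apply differentiableAt_pi.mpr
  intro i
  fin_cases i <;> simp only [cross3, Matrix.cons_val_zero, Matrix.cons_val_one, Matrix.head_cons,
    Matrix.cons_val_two, Matrix.tail_cons] <;>
    exact ((hfi _).mul (hgi _)).sub ((hfi _).mul (hgi _))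

lemma pupv_symm {f : ℝ × ℝ → V3} {U : Set (ℝ × ℝ)} (hU : IsOpen U)
    (hf : ContDiffOn ℝ (⊤ : ℕ∞) f U) {p : ℝ × ℝ} (hp : p ∈ U) : pu (pv f) p = pv (pu f) p := by
  have h2 : ContDiffAt ℝ 2 f p := (hf.contDiffAt (hU.mem_nhds hp)).of_le (by exact WithTop.coe_le_coe.mpr (le_top : (2 : ℕ∞) ≤ ⊤))
  have hsym := h2.isSymmSndFDerivAt (by simp)
  have hdiff : DifferentiableAt ℝ (fderiv ℝ f) p :=
    (h2.fderiv_right (m := 1) (by norm_num)).differentiableAt one_ne_zero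
  have h1 : pu (pv f) p = fderiv ℝ (fderiv ℝ f) p (1, 0) (0, 1) := by
    show fderiv ℝ (fun q => fderiv ℝ f q (0, 1)) p (1, 0) = _
    rw [fderiv_clm_apply hdiff (differentiableAt_const _)]
    simp
  have h2' : pv (pu f) p = fderiv ℝ (fderiv ℝ f) p (0, 1) (1, 0) := by
    show fderiv ℝ (fun q => fderiv ℝ f q (1, 0)) p (0, 1) = _
    rw [fderiv_clm_apply hdiff (differentiableAt_const _)]
    simp
  rw [h1, h2', hsym]

lemma fderiv_congr_open {X : Type} [NormedAddCommGroup X] [NormedSpace ℝ X]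
    {f g : ℝ × ℝ → X} {U : Set (ℝ × ℝ)} (hU : IsOpen U) (hfg : ∀ q ∈ U, f q = g q)
    {p : ℝ × ℝ} (hp : p ∈ U) : fderiv ℝ f p = fderiv ℝ g p :=
  Filter.EventuallyEq.fderiv_eq (Filter.eventually_of_mem (hU.mem_nhds hp) hfg)


set_option maxHeartbeats 2000000 in
/-- Gauss' theorema-egregium-type identity for lines of curvature:
`K = c₁c₂ = (1/√G) ∂_v κ₁ − (1/√E) ∂_u κ₂ − κ₁² − κ₂²`, and equivalently
`K = ν · curl_s ω` with the spin connection `ω = −(κ₁ e₁ + κ₂ e₂)`. -/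
theorem gaussian_curvature_from_geodesic_curvatures
    (U : Set (ℝ × ℝ)) (hU : IsOpen U)
    (φ : ℝ × ℝ → V3) (hφ : ContDiffOn ℝ (⊤ : ℕ∞) φ U)
    (hEpos : ∀ p ∈ U, 0 < Efun φ p) (hGpos : ∀ p ∈ U, 0 < Gfun φ p)
    (horth : ∀ p ∈ U, dot3 (pu φ p) (pv φ p) = 0)
    (c₁ c₂ : ℝ × ℝ → ℝ) (hc₁ : ContDiffOn ℝ (⊤ : ℕ∞) c₁ U) (hc₂ : ContDiffOn ℝ (⊤ : ℕ∞) c₂ U)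
    (hcurv : ∀ p ∈ U, pu (nuv φ) p = (-c₁ p) • pu φ p ∧ pv (nuv φ) p = (-c₂ p) • pv φ p) :
    ∀ p ∈ U,
      c₁ p * c₂ p =
          (Real.sqrt (Gfun φ p))⁻¹ * pv (kap1 φ) p - (Real.sqrt (Efun φ p))⁻¹ * pu (kap2 φ) p -
            (kap1 φ p) ^ 2 - (kap2 φ p) ^ 2 ∧
        c₁ p * c₂ p =
          dot3 (nuv φ p)
            (curlS φ (fun p' => -(kap1 φ p' • e1 φ p' + kap2 φ p' • e2 φ p')) p) := by
  intro p hp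
  -- smoothness bookkeeping
  have hφu : ContDiffOn ℝ (⊤ : ℕ∞) (pu φ) U := contDiffOn_pun hU hφ
  have hφv : ContDiffOn ℝ (⊤ : ℕ∞) (pv φ) U := contDiffOn_pvn hU hφ
  have hφuu : ContDiffOn ℝ (⊤ : ℕ∞) (pu (pu φ)) U := contDiffOn_pun hU hφu
  have hφuv : ContDiffOn ℝ (⊤ : ℕ∞) (pu (pv φ)) U := contDiffOn_pun hU hφv
  have hφvu : ContDiffOn ℝ (⊤ : ℕ∞) (pv (pu φ)) U := contDiffOn_pvn hU hφu
  have hφvv : ContDiffOn ℝ (⊤ : ℕ∞) (pv (pv φ)) U := contDiffOn_pvn hU hφv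
  have hEc : ContDiffOn ℝ (⊤ : ℕ∞) (Efun φ) U := contDiffOn_dot3 hφu hφu
  have hGc : ContDiffOn ℝ (⊤ : ℕ∞) (Gfun φ) U := contDiffOn_dot3 hφv hφv
  have hEvc : ContDiffOn ℝ (⊤ : ℕ∞) (pv (Efun φ)) U := contDiffOn_pvn hU hEc
  have hGuc : ContDiffOn ℝ (⊤ : ℕ∞) (pu (Gfun φ)) U := contDiffOn_pun hU hGc
  have dφu := diffAt_of_cd hU hφu hp
  have dφv := diffAt_of_cd hU hφv hp
  have dφuu := diffAt_of_cd hU hφuu hp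
  have dφuv := diffAt_of_cd hU hφuv hp
  have dφvv := diffAt_of_cd hU hφvv hp
  have dE := diffAt_of_cd hU hEc hp
  have dG := diffAt_of_cd hU hGc hp
  have dEv := diffAt_of_cd hU hEvc hp
  have dGu := diffAt_of_cd hU hGuc hp
  -- positivity
  have hEp := hEpos p hp
  have hGp := hGpos p hp
  have hsp : 0 < Real.sqrt (Efun φ p) := Real.sqrt_pos.mpr hEp
  have htp : 0 < Real.sqrt (Gfun φ p) := Real.sqrt_pos.mpr hGp
  have hsne : Real.sqrt (Efun φ p) ≠ 0 := ne_of_gt hsp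
  have htne : Real.sqrt (Gfun φ p) ≠ 0 := ne_of_gt htp
  have hs2 : Real.sqrt (Efun φ p) ^ 2 = Efun φ p := Real.sq_sqrt hEp.le
  have ht2 : Real.sqrt (Gfun φ p) ^ 2 = Gfun φ p := Real.sq_sqrt hGp.le
  have ha : dot3 (pu φ p) (pu φ p) = Efun φ p := rfl
  have hb : dot3 (pv φ p) (pv φ p) = Gfun φ p := rfl
  -- first derivatives of the metric coefficients
  have hEv' : ∀ q ∈ U, pv (Efun φ) q =
      dot3 (pv (pu φ) q) (pu φ q) + dot3 (pu φ q) (pv (pu φ) q) := fun q hq =>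
    fderiv_dot3 (diffAt_of_cd hU hφu hq) (diffAt_of_cd hU hφu hq) ((0:ℝ), (1:ℝ))
  have hEu' : pu (Efun φ) p = dot3 (pu (pu φ) p) (pu φ p) + dot3 (pu φ p) (pu (pu φ) p) :=
    fderiv_dot3 dφu dφu ((1:ℝ), (0:ℝ))
  have hGu' : ∀ q ∈ U, pu (Gfun φ) q =
      dot3 (pu (pv φ) q) (pv φ q) + dot3 (pv φ q) (pu (pv φ) q) := fun q hq =>
    fderiv_dot3 (diffAt_of_cd hU hφv hq) (diffAt_of_cd hU hφv hq) ((1:ℝ), (0:ℝ))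
  have hGv' : pv (Gfun φ) p = dot3 (pv (pv φ) p) (pv φ p) + dot3 (pv φ p) (pv (pv φ) p) :=
    fderiv_dot3 dφv dφv ((0:ℝ), (1:ℝ))
  have hsymU : ∀ q ∈ U, pu (pv φ) q = pv (pu φ) q := fun q hq => pupv_symm hU hφ hq
  -- derivatives of the orthogonality relation
  have horthd1 : ∀ q ∈ U,
      dot3 (pu (pu φ) q) (pv φ q) + dot3 (pu φ q) (pu (pv φ) q) = 0 := by
    intro q hq
    have h1 := fderiv_dot3 (diffAt_of_cd hU hφu hq) (diffAt_of_cd hU hφv hq) ((1:ℝ), (0:ℝ))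
    have h2 : fderiv ℝ (fun q => dot3 (pu φ q) (pv φ q)) q = fderiv ℝ (fun _ => (0:ℝ)) q :=
      fderiv_congr_open hU horth hq
    calc dot3 (pu (pu φ) q) (pv φ q) + dot3 (pu φ q) (pu (pv φ) q)
        = fderiv ℝ (fun q => dot3 (pu φ q) (pv φ q)) q ((1:ℝ), (0:ℝ)) := h1.symm
      _ = 0 := by rw [h2]; simp
  have horthd2 : dot3 (pv (pu φ) p) (pv φ p) + dot3 (pu φ p) (pv (pv φ) p) = 0 := by
    have h1 := fderiv_dot3 dφu dφv ((0:ℝ), (1:ℝ))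
    have h2 : fderiv ℝ (fun q => dot3 (pu φ q) (pv φ q)) p = fderiv ℝ (fun _ => (0:ℝ)) p :=
      fderiv_congr_open hU horth hp
    calc dot3 (pv (pu φ) p) (pv φ p) + dot3 (pu φ p) (pv (pv φ) p)
        = fderiv ℝ (fun q => dot3 (pu φ q) (pv φ q)) p ((0:ℝ), (1:ℝ)) := h1.symm
      _ = 0 := by rw [h2]; simp
  -- dot product values at p
  have FAa : dot3 (pu (pu φ) p) (pu φ p) = pu (Efun φ) p / 2 := by
    rw [hEu', dot3_comm' (pu φ p) (pu (pu φ) p)]; ring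
  have FBa : dot3 (pv (pu φ) p) (pu φ p) = pv (Efun φ) p / 2 := by
    rw [hEv' p hp, dot3_comm' (pu φ p) (pv (pu φ) p)]; ring
  have FB2b : dot3 (pu (pv φ) p) (pv φ p) = pu (Gfun φ) p / 2 := by
    rw [hGu' p hp, dot3_comm' (pv φ p) (pu (pv φ) p)]; ring
  have FCb : dot3 (pv (pv φ) p) (pv φ p) = pv (Gfun φ) p / 2 := by
    rw [hGv', dot3_comm' (pv φ p) (pv (pv φ) p)]; ring
  have FB2a : dot3 (pu (pv φ) p) (pu φ p) = pv (Efun φ) p / 2 := by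
    rw [hsymU p hp]; exact FBa
  have FAb : dot3 (pu (pu φ) p) (pv φ p) = -(pv (Efun φ) p / 2) := by
    have h := horthd1 p hp
    rw [hsymU p hp, dot3_comm' (pu φ p) (pv (pu φ) p), FBa] at h
    linarith
  have FCa : dot3 (pv (pv φ) p) (pu φ p) = -(pu (Gfun φ) p / 2) := by
    have h := horthd2
    rw [← hsymU p hp, FB2b, dot3_comm' (pu φ p) (pv (pv φ) p)] at h
    linarith
  -- the unnormalized normal
  have hnuv : nuv φ = fun q =>
      ((Real.sqrt (Efun φ q))⁻¹ * (Real.sqrt (Gfun φ q))⁻¹) • cross3 (pu φ q) (pv φ q) :=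
    funext fun q => cross3_smul₂ _ _ _ _
  have diffsE : DifferentiableAt ℝ (fun q => (Real.sqrt (Efun φ q))⁻¹) p :=
    differentiableAt_inv_comp (differentiableAt_sqrt_comp dE hEp.ne') hsne
  have diffsG : DifferentiableAt ℝ (fun q => (Real.sqrt (Gfun φ q))⁻¹) p :=
    differentiableAt_inv_comp (differentiableAt_sqrt_comp dG hGp.ne') htne
  have diffnuv : DifferentiableAt ℝ (nuv φ) p := by
    rw [hnuv]
    exact (diffsE.mul diffsG).smul (differentiableAt_cross3 dφu dφv)
  have hνp : nuv φ p =
      ((Real.sqrt (Efun φ p))⁻¹ * (Real.sqrt (Gfun φ p))⁻¹) • cross3 (pu φ p) (pv φ p) :=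
    congrFun hnuv p
  have hz1 : (fun q => dot3 (nuv φ q) (pu φ q)) = fun _ => (0 : ℝ) := by
    funext q
    rw [congrFun hnuv q, dot3_smul_left', dot3_cross_left', mul_zero]
  have hz2 : (fun q => dot3 (nuv φ q) (pv φ q)) = fun _ => (0 : ℝ) := by
    funext q
    rw [congrFun hnuv q, dot3_smul_left', dot3_cross_right', mul_zero]
  have hνA : dot3 (nuv φ p) (pu (pu φ) p) = c₁ p * Efun φ p := by
    have h1 := fderiv_dot3 diffnuv dφu ((1:ℝ), (0:ℝ))
    have h2 : fderiv ℝ (fun q => dot3 (nuv φ q) (pu φ q)) p = fderiv ℝ (fun _ => (0:ℝ)) p := by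
      rw [hz1]
    have h0 : (0:ℝ) = dot3 (pu (nuv φ) p) (pu φ p) + dot3 (nuv φ p) (pu (pu φ) p) := by
      calc (0:ℝ) = fderiv ℝ (fun _ => (0:ℝ)) p ((1:ℝ), (0:ℝ)) := by simp
        _ = fderiv ℝ (fun q => dot3 (nuv φ q) (pu φ q)) p ((1:ℝ), (0:ℝ)) := by rw [h2]
        _ = _ := h1
    rw [(hcurv p hp).1, dot3_smul_left', ha] at h0
    linarith
  have hνBm : dot3 (nuv φ p) (pv (pu φ) p) = 0 := by
    have h1 := fderiv_dot3 diffnuv dφu ((0:ℝ), (1:ℝ))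
    have h2 : fderiv ℝ (fun q => dot3 (nuv φ q) (pu φ q)) p = fderiv ℝ (fun _ => (0:ℝ)) p := by
      rw [hz1]
    have h0 : (0:ℝ) = dot3 (pv (nuv φ) p) (pu φ p) + dot3 (nuv φ p) (pv (pu φ) p) := by
      calc (0:ℝ) = fderiv ℝ (fun _ => (0:ℝ)) p ((0:ℝ), (1:ℝ)) := by simp
        _ = fderiv ℝ (fun q => dot3 (nuv φ q) (pu φ q)) p ((0:ℝ), (1:ℝ)) := by rw [h2]
        _ = _ := h1
    rw [(hcurv p hp).2, dot3_smul_left', dot3_comm' (pv φ p) (pu φ p), horth p hp] at h0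
    linarith
  have hνC : dot3 (nuv φ p) (pv (pv φ) p) = c₂ p * Gfun φ p := by
    have h1 := fderiv_dot3 diffnuv dφv ((0:ℝ), (1:ℝ))
    have h2 : fderiv ℝ (fun q => dot3 (nuv φ q) (pv φ q)) p = fderiv ℝ (fun _ => (0:ℝ)) p := by
      rw [hz2]
    have h0 : (0:ℝ) = dot3 (pv (nuv φ) p) (pv φ p) + dot3 (nuv φ p) (pv (pv φ) p) := by
      calc (0:ℝ) = fderiv ℝ (fun _ => (0:ℝ)) p ((0:ℝ), (1:ℝ)) := by simp
        _ = fderiv ℝ (fun q => dot3 (nuv φ q) (pv φ q)) p ((0:ℝ), (1:ℝ)) := by rw [h2]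
        _ = _ := h1
    rw [(hcurv p hp).2, dot3_smul_left', hb] at h0
    linarith
  -- translate to the unnormalized normal
  have FAn : dot3 (pu (pu φ) p) (cross3 (pu φ p) (pv φ p)) =
      Real.sqrt (Efun φ p) * Real.sqrt (Gfun φ p) * (c₁ p * Efun φ p) := by
    have h := hνA
    rw [hνp, dot3_smul_left'] at h
    rw [dot3_comm' (pu (pu φ) p) (cross3 (pu φ p) (pv φ p))]
    field_simp at h ⊢
    linarith
  have FB2n : dot3 (pu (pv φ) p) (cross3 (pu φ p) (pv φ p)) = 0 := by
    have h := hνBm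
    rw [hνp, dot3_smul_left'] at h
    rw [hsymU p hp, dot3_comm' (pv (pu φ) p) (cross3 (pu φ p) (pv φ p))]
    rcases mul_eq_zero.mp h with h' | h'
    · exact absurd h' (by positivity)
    · exact h'
  have FCn : dot3 (pv (pv φ) p) (cross3 (pu φ p) (pv φ p)) =
      Real.sqrt (Efun φ p) * Real.sqrt (Gfun φ p) * (c₂ p * Gfun φ p) := by
    have h := hνC
    rw [hνp, dot3_smul_left'] at h
    rw [dot3_comm' (pv (pv φ) p) (cross3 (pu φ p) (pv φ p))]
    field_simp at h ⊢
    linarith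
  -- function identities on U for third derivatives
  have keyF : ∀ q ∈ U, dot3 (pu (pu φ) q) (pv φ q) = (-(2:ℝ)⁻¹) * pv (Efun φ) q := by
    intro q hq
    have h := horthd1 q hq
    rw [hsymU q hq] at h
    rw [hEv' q hq]
    linarith [h, dot3_comm' (pu φ q) (pv (pu φ) q)]
  have keyG : ∀ q ∈ U, dot3 (pu (pv φ) q) (pv φ q) = (2:ℝ)⁻¹ * pu (Gfun φ) q := by
    intro q hq
    rw [hGu' q hq]
    linarith [dot3_comm' (pv φ q) (pu (pv φ) q)]
  have hF2 : dot3 (pv (pu (pu φ)) p) (pv φ p) + dot3 (pu (pu φ) p) (pv (pv φ) p) =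
      (-(2:ℝ)⁻¹) * pv (pv (Efun φ)) p := by
    have h1 := fderiv_dot3 dφuu dφv ((0:ℝ), (1:ℝ))
    have h2 : fderiv ℝ (fun q => dot3 (pu (pu φ) q) (pv φ q)) p =
        fderiv ℝ (fun q => (-(2:ℝ)⁻¹) * pv (Efun φ) q) p := fderiv_congr_open hU keyF hp
    have h3 : fderiv ℝ (fun q => (-(2:ℝ)⁻¹) * pv (Efun φ) q) p ((0:ℝ), (1:ℝ)) =
        (-(2:ℝ)⁻¹) * pv (pv (Efun φ)) p := by
      rw [fderiv_const_mul dEv (-(2:ℝ)⁻¹)]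
      simp only [ContinuousLinearMap.smul_apply, smul_eq_mul]
      rfl
    calc dot3 (pv (pu (pu φ)) p) (pv φ p) + dot3 (pu (pu φ) p) (pv (pv φ) p)
        = fderiv ℝ (fun q => dot3 (pu (pu φ) q) (pv φ q)) p ((0:ℝ), (1:ℝ)) := h1.symm
      _ = _ := by rw [h2, h3]
  have hG2 : dot3 (pu (pu (pv φ)) p) (pv φ p) + dot3 (pu (pv φ) p) (pu (pv φ) p) =
      (2:ℝ)⁻¹ * pu (pu (Gfun φ)) p := by
    have h1 := fderiv_dot3 dφuv dφv ((1:ℝ), (0:ℝ))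
    have h2 : fderiv ℝ (fun q => dot3 (pu (pv φ) q) (pv φ q)) p =
        fderiv ℝ (fun q => (2:ℝ)⁻¹ * pu (Gfun φ) q) p := fderiv_congr_open hU keyG hp
    have h3 : fderiv ℝ (fun q => (2:ℝ)⁻¹ * pu (Gfun φ) q) p ((1:ℝ), (0:ℝ)) =
        (2:ℝ)⁻¹ * pu (pu (Gfun φ)) p := by
      rw [fderiv_const_mul dGu ((2:ℝ)⁻¹)]
      simp only [ContinuousLinearMap.smul_apply, smul_eq_mul]
      rfl
    calc dot3 (pu (pu (pv φ)) p) (pv φ p) + dot3 (pu (pv φ) p) (pu (pv φ) p)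
        = fderiv ℝ (fun q => dot3 (pu (pv φ) q) (pv φ q)) p ((1:ℝ), (0:ℝ)) := h1.symm
      _ = _ := by rw [h2, h3]
  have hmix : pv (pu (pu φ)) p = pu (pu (pv φ)) p := by
    have h1 : pu (pv (pu φ)) p = pv (pu (pu φ)) p := pupv_symm hU hφu hp
    have h2 : fderiv ℝ (pv (pu φ)) p = fderiv ℝ (pu (pv φ)) p :=
      fderiv_congr_open hU (fun q hq => (hsymU q hq).symm) hp
    have h3 : pu (pv (pu φ)) p = pu (pu (pv φ)) p := by
      show fderiv ℝ (pv (pu φ)) p ((1:ℝ), (0:ℝ)) = fderiv ℝ (pu (pv φ)) p ((1:ℝ), (0:ℝ))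
      rw [h2]
    rw [← h1, h3]
  have hACBB : dot3 (pu (pu φ) p) (pv (pv φ) p) - dot3 (pu (pv φ) p) (pu (pv φ) p) =
      (-(2:ℝ)⁻¹) * pv (pv (Efun φ)) p - (2:ℝ)⁻¹ * pu (pu (Gfun φ)) p := by
    have h := hG2
    rw [← hmix] at h
    linarith [hF2, h]
  -- the Gauss relation
  have hstar : c₁ p * c₂ p * (Efun φ p * Gfun φ p) ^ 2 =
      Efun φ p * Gfun φ p *
          ((-(2:ℝ)⁻¹) * pv (pv (Efun φ)) p - (2:ℝ)⁻¹ * pu (pu (Gfun φ)) p) +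
        pu (Efun φ) p * pu (Gfun φ) p * Gfun φ p / 4 +
        pv (Efun φ) p * pv (Gfun φ) p * Efun φ p / 4 +
        pv (Efun φ) p ^ 2 * Gfun φ p / 4 + pu (Gfun φ) p ^ 2 * Efun φ p / 4 := by
    have d1 := decomp3 (pu φ p) (pv φ p) (pu (pu φ) p) (pv (pv φ) p) (horth p hp)
    have d2 := decomp3 (pu φ p) (pv φ p) (pu (pv φ) p) (pu (pv φ) p) (horth p hp)
    rw [ha, hb, FAa, FAb, FCa, FCb, FAn, FCn] at d1
    rw [ha, hb, FB2a, FB2b, FB2n] at d2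
    linear_combination -d1 + d2 + (Efun φ p * Gfun φ p) * hACBB -
      (c₁ p * c₂ p * Efun φ p * Gfun φ p * Real.sqrt (Gfun φ p) ^ 2) * hs2 -
      (c₁ p * c₂ p * Efun φ p * Gfun φ p * Efun φ p) * ht2
  -- derivatives of the geodesic curvatures
  have hk1 : kap1 φ p = -(pv (Efun φ) p) / (2 * Efun φ p * Real.sqrt (Gfun φ p)) := rfl
  have hk2 : kap2 φ p = pu (Gfun φ) p / (2 * Gfun φ p * Real.sqrt (Efun φ p)) := rfl
  have dsqE : DifferentiableAt ℝ (fun q => Real.sqrt (Efun φ q)) p :=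
    differentiableAt_sqrt_comp dE hEp.ne'
  have dsqG : DifferentiableAt ℝ (fun q => Real.sqrt (Gfun φ q)) p :=
    differentiableAt_sqrt_comp dG hGp.ne'
  have dDen1 : DifferentiableAt ℝ (fun q => 2 * Efun φ q * Real.sqrt (Gfun φ q)) p :=
    ((differentiableAt_const _).mul dE).mul dsqG
  have dDen2 : DifferentiableAt ℝ (fun q => 2 * Gfun φ q * Real.sqrt (Efun φ q)) p :=
    ((differentiableAt_const _).mul dG).mul dsqE
  have hDen1 : 2 * Efun φ p * Real.sqrt (Gfun φ p) ≠ 0 := by positivity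
  have hDen2 : 2 * Gfun φ p * Real.sqrt (Efun φ p) ≠ 0 := by positivity
  have hK1v : pv (kap1 φ) p =
      (-(pv (pv (Efun φ)) p) * (2 * Efun φ p * Real.sqrt (Gfun φ p)) -
        -(pv (Efun φ) p) * (2 * pv (Efun φ) p * Real.sqrt (Gfun φ p) +
          2 * Efun φ p * (pv (Gfun φ) p / (2 * Real.sqrt (Gfun φ p))))) /
        (2 * Efun φ p * Real.sqrt (Gfun φ p)) ^ 2 := by
    have h1 := fderiv_divF (c := fun q => -(pv (Efun φ) q))
      (d := fun q => 2 * Efun φ q * Real.sqrt (Gfun φ q)) dEv.neg dDen1 hDen1 ((0:ℝ), (1:ℝ))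
    have h2 : fderiv ℝ (fun q => -(pv (Efun φ) q)) p ((0:ℝ), (1:ℝ)) = -(pv (pv (Efun φ)) p) := by
      rw [fderiv_negF]; rfl
    have h3 : fderiv ℝ (fun q => 2 * Efun φ q * Real.sqrt (Gfun φ q)) p ((0:ℝ), (1:ℝ)) =
        2 * pv (Efun φ) p * Real.sqrt (Gfun φ p) +
          2 * Efun φ p * (pv (Gfun φ) p / (2 * Real.sqrt (Gfun φ p))) := by
      rw [fderiv_mulF (c := fun q => 2 * Efun φ q) ((differentiableAt_const _).mul dE) dsqG, fderiv_sqrt_comp dG hGp.ne',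
        fderiv_const_mul dE (2:ℝ)]
      simp only [ContinuousLinearMap.smul_apply, smul_eq_mul]
      rfl
    calc pv (kap1 φ) p
        = (fderiv ℝ (fun q => -(pv (Efun φ) q)) p ((0:ℝ), (1:ℝ)) *
              (2 * Efun φ p * Real.sqrt (Gfun φ p)) -
            -(pv (Efun φ) p) *
              fderiv ℝ (fun q => 2 * Efun φ q * Real.sqrt (Gfun φ q)) p ((0:ℝ), (1:ℝ))) /
            (2 * Efun φ p * Real.sqrt (Gfun φ p)) ^ 2 := h1
      _ = _ := by rw [h2, h3]
  have hK2u : pu (kap2 φ) p =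
      (pu (pu (Gfun φ)) p * (2 * Gfun φ p * Real.sqrt (Efun φ p)) -
        pu (Gfun φ) p * (2 * pu (Gfun φ) p * Real.sqrt (Efun φ p) +
          2 * Gfun φ p * (pu (Efun φ) p / (2 * Real.sqrt (Efun φ p))))) /
        (2 * Gfun φ p * Real.sqrt (Efun φ p)) ^ 2 := by
    have h1 := fderiv_divF (c := pu (Gfun φ))
      (d := fun q => 2 * Gfun φ q * Real.sqrt (Efun φ q)) dGu dDen2 hDen2 ((1:ℝ), (0:ℝ))
    have h3 : fderiv ℝ (fun q => 2 * Gfun φ q * Real.sqrt (Efun φ q)) p ((1:ℝ), (0:ℝ)) =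
        2 * pu (Gfun φ) p * Real.sqrt (Efun φ p) +
          2 * Gfun φ p * (pu (Efun φ) p / (2 * Real.sqrt (Efun φ p))) := by
      rw [fderiv_mulF (c := fun q => 2 * Gfun φ q) ((differentiableAt_const _).mul dG) dsqE, fderiv_sqrt_comp dE hEp.ne',
        fderiv_const_mul dG (2:ℝ)]
      simp only [ContinuousLinearMap.smul_apply, smul_eq_mul]
      rfl
    calc pu (kap2 φ) p
        = (fderiv ℝ (pu (Gfun φ)) p ((1:ℝ), (0:ℝ)) * (2 * Gfun φ p * Real.sqrt (Efun φ p)) -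
            pu (Gfun φ) p *
              fderiv ℝ (fun q => 2 * Gfun φ q * Real.sqrt (Efun φ q)) p ((1:ℝ), (0:ℝ))) /
            (2 * Gfun φ p * Real.sqrt (Efun φ p)) ^ 2 := h1
      _ = _ := by rw [h3]; rfl
  -- Part 1
  have hEGne : (Efun φ p * Gfun φ p) ^ 2 ≠ 0 := by positivity
  have part1 : c₁ p * c₂ p =
      (Real.sqrt (Gfun φ p))⁻¹ * pv (kap1 φ) p - (Real.sqrt (Efun φ p))⁻¹ * pu (kap2 φ) p -
        kap1 φ p ^ 2 - kap2 φ p ^ 2 := by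
    have key : ((Real.sqrt (Gfun φ p))⁻¹ * pv (kap1 φ) p -
        (Real.sqrt (Efun φ p))⁻¹ * pu (kap2 φ) p - kap1 φ p ^ 2 - kap2 φ p ^ 2) *
          (Efun φ p * Gfun φ p) ^ 2 = c₁ p * c₂ p * (Efun φ p * Gfun φ p) ^ 2 := by
      rw [hK1v, hK2u, hk1, hk2, hstar]
      generalize hsg : Real.sqrt (Efun φ p) = S
      generalize htg : Real.sqrt (Gfun φ p) = T
      rw [hsg] at hs2 hsne
      rw [htg] at ht2 htne
      rw [← hs2, ← ht2]
      field_simp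
      ring
    exact (mul_right_cancel₀ hEGne key).symm
  refine ⟨part1, ?_⟩
  -- Part 2
  have diffk1 : DifferentiableAt ℝ (kap1 φ) p := by
    have h : DifferentiableAt ℝ
        (fun q => -(pv (Efun φ) q) / (2 * Efun φ q * Real.sqrt (Gfun φ q))) p :=
      differentiableAt_divF dEv.neg dDen1 hDen1
    exact h
  have diffk2 : DifferentiableAt ℝ (kap2 φ) p := by
    have h : DifferentiableAt ℝ
        (fun q => pu (Gfun φ) q / (2 * Gfun φ q * Real.sqrt (Efun φ q))) p :=
      differentiableAt_divF dGu dDen2 hDen2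
    exact h
  have difff1 : DifferentiableAt ℝ (fun q => -(kap1 φ q * (Real.sqrt (Efun φ q))⁻¹)) p :=
    (diffk1.mul diffsE).neg
  have difff2 : DifferentiableAt ℝ (fun q => -(kap2 φ q * (Real.sqrt (Gfun φ q))⁻¹)) p :=
    (diffk2.mul diffsG).neg
  have hω : (fun p' => -(kap1 φ p' • e1 φ p' + kap2 φ p' • e2 φ p')) = (fun q => (-(kap1 φ q * (Real.sqrt (Efun φ q))⁻¹)) • pu φ q + (-(kap2 φ q * (Real.sqrt (Gfun φ q))⁻¹)) • pv φ q) := by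
    funext q
    show -(kap1 φ q • ((Real.sqrt (Efun φ q))⁻¹ • pu φ q) +
        kap2 φ q • ((Real.sqrt (Gfun φ q))⁻¹ • pv φ q)) = _
    rw [smul_smul, smul_smul, neg_add, ← neg_smul, ← neg_smul]
  have hX : pu (fun q => (-(kap1 φ q * (Real.sqrt (Efun φ q))⁻¹)) • pu φ q + (-(kap2 φ q * (Real.sqrt (Gfun φ q))⁻¹)) • pv φ q) p =
      fderiv ℝ (fun q => -(kap1 φ q * (Real.sqrt (Efun φ q))⁻¹)) p ((1:ℝ), (0:ℝ)) • pu φ p +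
        (-(kap1 φ p * (Real.sqrt (Efun φ p))⁻¹)) • pu (pu φ) p +
        (fderiv ℝ (fun q => -(kap2 φ q * (Real.sqrt (Gfun φ q))⁻¹)) p ((1:ℝ), (0:ℝ)) • pv φ p +
          (-(kap2 φ p * (Real.sqrt (Gfun φ p))⁻¹)) • pu (pv φ) p) := by
    show fderiv ℝ _ p ((1:ℝ), (0:ℝ)) = _
    rw [fderiv_fun_add (difff1.fun_smul dφu) (difff2.fun_smul dφv), ContinuousLinearMap.add_apply,
      fderiv_smulV difff1 dφu, fderiv_smulV difff2 dφv]
    rfl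
  have hY : pv (fun q => (-(kap1 φ q * (Real.sqrt (Efun φ q))⁻¹)) • pu φ q + (-(kap2 φ q * (Real.sqrt (Gfun φ q))⁻¹)) • pv φ q) p =
      fderiv ℝ (fun q => -(kap1 φ q * (Real.sqrt (Efun φ q))⁻¹)) p ((0:ℝ), (1:ℝ)) • pu φ p +
        (-(kap1 φ p * (Real.sqrt (Efun φ p))⁻¹)) • pv (pu φ) p +
        (fderiv ℝ (fun q => -(kap2 φ q * (Real.sqrt (Gfun φ q))⁻¹)) p ((0:ℝ), (1:ℝ)) • pv φ p +
          (-(kap2 φ p * (Real.sqrt (Gfun φ p))⁻¹)) • pv (pv φ) p) := by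
    show fderiv ℝ _ p ((0:ℝ), (1:ℝ)) = _
    rw [fderiv_fun_add (difff1.fun_smul dφu) (difff2.fun_smul dφv), ContinuousLinearMap.add_apply,
      fderiv_smulV difff1 dφu, fderiv_smulV difff2 dφv]
    rfl
  have hbX : dot3 (pv φ p) (pu (fun q => (-(kap1 φ q * (Real.sqrt (Efun φ q))⁻¹)) • pu φ q + (-(kap2 φ q * (Real.sqrt (Gfun φ q))⁻¹)) • pv φ q) p) =
      -(kap1 φ p * (Real.sqrt (Efun φ p))⁻¹) * (-(pv (Efun φ) p / 2)) +
        fderiv ℝ (fun q => -(kap2 φ q * (Real.sqrt (Gfun φ q))⁻¹)) p ((1:ℝ), (0:ℝ)) * Gfun φ p +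
        -(kap2 φ p * (Real.sqrt (Gfun φ p))⁻¹) * (pu (Gfun φ) p / 2) := by
    rw [hX, dot3_add_right', dot3_add_right', dot3_add_right', dot3_smul_right',
      dot3_smul_right', dot3_smul_right', dot3_smul_right',
      dot3_comm' (pv φ p) (pu φ p), horth p hp, dot3_comm' (pv φ p) (pu (pu φ) p), FAb, hb,
      dot3_comm' (pv φ p) (pu (pv φ) p), FB2b]
    ring
  have haY : dot3 (pu φ p) (pv (fun q => (-(kap1 φ q * (Real.sqrt (Efun φ q))⁻¹)) • pu φ q + (-(kap2 φ q * (Real.sqrt (Gfun φ q))⁻¹)) • pv φ q) p) =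
      fderiv ℝ (fun q => -(kap1 φ q * (Real.sqrt (Efun φ q))⁻¹)) p ((0:ℝ), (1:ℝ)) * Efun φ p +
        -(kap1 φ p * (Real.sqrt (Efun φ p))⁻¹) * (pv (Efun φ) p / 2) +
        -(kap2 φ p * (Real.sqrt (Gfun φ p))⁻¹) * (-(pu (Gfun φ) p / 2)) := by
    rw [hY, dot3_add_right', dot3_add_right', dot3_add_right', dot3_smul_right',
      dot3_smul_right', dot3_smul_right', dot3_smul_right', ha,
      dot3_comm' (pu φ p) (pv (pu φ) p), FBa, horth p hp,
      dot3_comm' (pu φ p) (pv (pv φ) p), FCa]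
    ring
  have hpvf1 : fderiv ℝ (fun q => -(kap1 φ q * (Real.sqrt (Efun φ q))⁻¹)) p ((0:ℝ), (1:ℝ)) =
      -(pv (kap1 φ) p * (Real.sqrt (Efun φ p))⁻¹ +
        kap1 φ p * (-(pv (Efun φ) p / (2 * Real.sqrt (Efun φ p))) / Real.sqrt (Efun φ p) ^ 2)) := by
    rw [fderiv_negF, fderiv_mulF diffk1 diffsE, fderiv_inv_comp dsqE hsne,
      fderiv_sqrt_comp dE hEp.ne']
    rfl
  have hpuf2 : fderiv ℝ (fun q => -(kap2 φ q * (Real.sqrt (Gfun φ q))⁻¹)) p ((1:ℝ), (0:ℝ)) =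
      -(pu (kap2 φ) p * (Real.sqrt (Gfun φ p))⁻¹ +
        kap2 φ p * (-(pu (Gfun φ) p / (2 * Real.sqrt (Gfun φ p))) / Real.sqrt (Gfun φ p) ^ 2)) := by
    rw [fderiv_negF, fderiv_mulF diffk2 diffsG, fderiv_inv_comp dsqG htne,
      fderiv_sqrt_comp dG hGp.ne']
    rfl
  rw [hω]
  have hcurl : dot3 (nuv φ p) (curlS φ (fun q => (-(kap1 φ q * (Real.sqrt (Efun φ q))⁻¹)) • pu φ q + (-(kap2 φ q * (Real.sqrt (Gfun φ q))⁻¹)) • pv φ q) p) =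
      (Real.sqrt (Efun φ p))⁻¹ * dot3 (nuv φ p) (cross3 (e1 φ p) (pu (fun q => (-(kap1 φ q * (Real.sqrt (Efun φ q))⁻¹)) • pu φ q + (-(kap2 φ q * (Real.sqrt (Gfun φ q))⁻¹)) • pv φ q) p)) +
        (Real.sqrt (Gfun φ p))⁻¹ * dot3 (nuv φ p) (cross3 (e2 φ p) (pv (fun q => (-(kap1 φ q * (Real.sqrt (Efun φ q))⁻¹)) • pu φ q + (-(kap2 φ q * (Real.sqrt (Gfun φ q))⁻¹)) • pv φ q) p)) :=
    curl_dot3 _ _ _ _ _ _ _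
  rw [hcurl]
  have he1 : e1 φ p = (Real.sqrt (Efun φ p))⁻¹ • pu φ p := rfl
  have he2 : e2 φ p = (Real.sqrt (Gfun φ p))⁻¹ • pv φ p := rfl
  rw [he1, he2, cross3_smul_left', cross3_smul_left', dot3_smul_right', dot3_smul_right',
    hνp, dot3_smul_left', dot3_smul_left', lagrange3, lagrange3, ha, hb, horth p hp,
    dot3_comm' (pv φ p) (pu φ p), horth p hp, hbX, haY, hpvf1, hpuf2, part1, hk1, hk2]
  generalize hsg : Real.sqrt (Efun φ p) = S
  generalize htg : Real.sqrt (Gfun φ p) = T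
  rw [hsg] at hs2 hsne
  rw [htg] at ht2 htne
  rw [← hs2, ← ht2]
  field_simp
  ring



end
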